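/- Let H and N be groups, H₁ ≤ Z(H), N₁ ≤ Z(N), and suppose there is a group homomorphism η : H → N whose restriction ξ = η|_{H₁} is an isomorphism from H₁ onto N₁. Let Z = {(a, ξ(a)⁻¹) : a ∈ H₁} ≤ H × N. If H₁ ∩ [H,H] equals the subgroup generated by H₁ ∩ K(H), then Z ∩ ([H,H] × [N,N]) equals the subgroup generated by Z ∩ (K(H) × K(N)). -/

import Mathlib

/-- `Kset G` is the set of commutators `[x,y] = x⁻¹y⁻¹xy` of `G`. -/
def Kset (G : Type*) [Group G] : Set G := {g | ∃ x y : G, g = x⁻¹ * y⁻¹ * x * y}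

/-!
Since `η` maps `H₁` into the centre of `N`, the map `g ↦ (g, (η g)⁻¹)` is multiplicative on
`H₁`, and it parametrises `Z`. Hence it carries `H₁ ⊓ [H,H] = ⟨H₁ ∩ K(H)⟩` into the subgroup
generated by the images of the generators, which are commutator pairs in `Z` because
homomorphisms and inversion preserve commutators. The reverse inclusion is immediate.
-/

open Subgroup
open scoped commutatorElement

lemma Kset_subset_commutator (G : Type*) [Group G] :
    Kset G ⊆ (commutator G : Set G) := by
  rintro g ⟨x, y, rfl⟩
  have hcomm : x⁻¹ * y⁻¹ * x * y = ⁅x⁻¹, y⁻¹⁆ := by group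
  rw [hcomm]
  exact commutator_mem_commutator (mem_top _) (mem_top _)

lemma Kset_inv {G : Type*} [Group G] {g : G} (hg : g ∈ Kset G) : g⁻¹ ∈ Kset G := by
  obtain ⟨x, y, rfl⟩ := hg
  exact ⟨y, x, by group⟩

lemma Kset_map {G G' : Type*} [Group G] [Group G'] (f : G →* G') {g : G}
    (hg : g ∈ Kset G) : f g ∈ Kset G' := by
  obtain ⟨x, y, rfl⟩ := hg
  exact ⟨f x, f y, by simp⟩

lemma mk_inv_map_mem_closure_image {G M : Type*} [Group G] [Group M] (f : G →* M)
    {s : Set G} (hs : ∀ x ∈ s, f x ∈ center M) {g : G} (hg : g ∈ closure s) :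
    (g, (f g)⁻¹) ∈ closure ((fun x ↦ (x, (f x)⁻¹)) '' s) := by
  have hcentral : ∀ x ∈ closure s, f x ∈ center M := fun x hx ↦
    (closure_le ((center M).comap f)).2 hs hx
  induction hg using closure_induction with
  | mem x hx => exact subset_closure ⟨x, hx, rfl⟩
  | one =>
    rw [map_one, inv_one]
    exact one_mem _
  | mul x y hx hy ihx ihy =>
    have hxy : (x * y, (f (x * y))⁻¹) = (x, (f x)⁻¹) * (y, (f y)⁻¹) := by
      rw [map_mul, mul_inv_rev, mem_center_iff.1 (inv_mem (hcentral x hx)) (f y)⁻¹]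
      rfl
    rw [hxy]
    exact mul_mem ihx ihy
  | inv x hx ihx => simpa using inv_mem ihx

theorem stmt_14_general {H N : Type*} [Group H] [Group N]
    (H₁ : Subgroup H) (N₁ : Subgroup N)
    (hN₁ : N₁ ≤ Subgroup.center N)
    (η : H →* N) (ξ : H₁ ≃* N₁)
    (hηξ : ∀ a : H₁, η (a : H) = ((ξ a : N₁) : N))
    (Z : Subgroup (H × N))
    (hZ : ∀ p : H × N, p ∈ Z ↔ ∃ a : H₁, p = ((a : H), ((ξ a : N₁) : N)⁻¹))
    (h : H₁ ⊓ commutator H = Subgroup.closure ((H₁ : Set H) ∩ Kset H)) :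
    Z ⊓ (commutator H).prod (commutator N) =
      Subgroup.closure ((Z : Set (H × N)) ∩ (Kset H ×ˢ Kset N)) := by
  refine le_antisymm ?_ (closure_le _ |>.2 fun p ⟨hpZ, hp₁, hp₂⟩ ↦
    ⟨hpZ, Kset_subset_commutator H hp₁, Kset_subset_commutator N hp₂⟩)
  rintro p ⟨hpZ, hp₁, -⟩
  obtain ⟨a, rfl⟩ := (hZ p).1 hpZ
  have ha : (a : H) ∈ closure ((H₁ : Set H) ∩ Kset H) := h ▸ ⟨a.2, hp₁⟩
  have hcentral : ∀ x ∈ (H₁ : Set H) ∩ Kset H, η x ∈ center N := fun x hx ↦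
    hηξ ⟨x, hx.1⟩ ▸ hN₁ (ξ ⟨x, hx.1⟩).2
  have himage : (fun x ↦ (x, (η x)⁻¹)) '' ((H₁ : Set H) ∩ Kset H) ⊆
      (Z : Set (H × N)) ∩ (Kset H ×ˢ Kset N) := by
    rintro _ ⟨x, hx, rfl⟩
    exact ⟨(hZ _).2 ⟨⟨x, hx.1⟩, by simp only [← hηξ]⟩, hx.2, Kset_inv (Kset_map η hx.2)⟩
  rw [← hηξ a]
  exact closure_mono himage (mk_inv_map_mem_closure_image η hcentral ha)

theorem stmt_14 {H N : Type*} [Group H] [Group N]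
    (H₁ : Subgroup H) (N₁ : Subgroup N)
    (hH₁ : H₁ ≤ Subgroup.center H) (hN₁ : N₁ ≤ Subgroup.center N)
    (η : H →* N) (ξ : H₁ ≃* N₁)
    (hηξ : ∀ a : H₁, η (a : H) = ((ξ a : N₁) : N))
    (Z : Subgroup (H × N))
    (hZ : ∀ p : H × N, p ∈ Z ↔ ∃ a : H₁, p = ((a : H), ((ξ a : N₁) : N)⁻¹))
    (h : H₁ ⊓ commutator H = Subgroup.closure ((H₁ : Set H) ∩ Kset H)) :
    Z ⊓ (commutator H).prod (commutator N) =
      Subgroup.closure ((Z : Set (H × N)) ∩ (Kset H ×ˢ Kset N)) :=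
  stmt_14_general H₁ N₁ hN₁ η ξ hηξ Z hZ h
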